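/- Let O₀ and O be open subsets of ℝ², and let r : O₀ → O be a C² diffeomorphism with C² inverse r̄ : O → O₀ such that det(Dr̄(x)) = 1 for all x ∈ O. Let f : O → ℝ be a C² function. Then for every y ∈ O₀, (Δf)(r(y)) = Σ_k ∂/∂y_k ( Σ_j h^{jk}(y) · ∂(f∘r)/∂y_j (y) ), where Δf = Σ_m ∂²f/∂x_m² is the Euclidean Laplacian on O. -/

import Mathlib

open MeasureTheory

/-- `pdv f i j y` = ∂f_i/∂y_j (y), for a vector field `f : ℝ² → ℝ²`. -/
noncomputable def pdv (f : (Fin 2 → ℝ) → Fin 2 → ℝ) (i j : Fin 2) (y : Fin 2 → ℝ) : ℝ :=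
  fderiv ℝ f y (Pi.single j 1) i

/-- `pdv2 f i j k y` = ∂²f_i/∂y_j∂y_k (y). -/
noncomputable def pdv2 (f : (Fin 2 → ℝ) → Fin 2 → ℝ) (i j k : Fin 2) (y : Fin 2 → ℝ) : ℝ :=
  fderiv ℝ (fun z => fderiv ℝ f z (Pi.single k 1) i) y (Pi.single j 1)

/-- `pds g j y` = ∂g/∂y_j (y), for a scalar function `g : ℝ² → ℝ`. -/
noncomputable def pds (g : (Fin 2 → ℝ) → ℝ) (j : Fin 2) (y : Fin 2 → ℝ) : ℝ :=
  fderiv ℝ g y (Pi.single j 1)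

/-- Christoffel symbols Γ^i_{jk}(y) = Σ_l (∂r̄_i/∂x_l)(r y) · (∂²r_l/∂y_j∂y_k)(y). -/
noncomputable def christoffel (r rb : (Fin 2 → ℝ) → Fin 2 → ℝ) (i j k : Fin 2)
    (y : Fin 2 → ℝ) : ℝ :=
  ∑ l : Fin 2, pdv rb i l (r y) * pdv2 r l j k y

/-- Covariant derivative `covD r rb v j i y` = (∇_j v)_i(y). -/
noncomputable def covD (r rb v : (Fin 2 → ℝ) → Fin 2 → ℝ) (j i : Fin 2) (y : Fin 2 → ℝ) : ℝ :=
  pdv v i j y + ∑ k : Fin 2, christoffel r rb i j k y * v y k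

/-- Divergence of a vector field. -/
noncomputable def divg (f : (Fin 2 → ℝ) → Fin 2 → ℝ) (y : Fin 2 → ℝ) : ℝ :=
  ∑ i : Fin 2, pdv f i i y

/-- Piola transform ũ_i(y) = Σ_j (∂r̄_i/∂x_j)(r y) · u_j(r y). -/
noncomputable def piola (r rb u : (Fin 2 → ℝ) → Fin 2 → ℝ) : (Fin 2 → ℝ) → Fin 2 → ℝ :=
  fun y i => ∑ j : Fin 2, pdv rb i j (r y) * u (r y) j

/-- Inverse Piola transform v̄_i(x) = Σ_j (∂r_i/∂y_j)(r̄ x) · v_j(r̄ x). -/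
noncomputable def invPiola (r rb v : (Fin 2 → ℝ) → Fin 2 → ℝ) : (Fin 2 → ℝ) → Fin 2 → ℝ :=
  fun x i => ∑ j : Fin 2, pdv r i j (rb x) * v (rb x) j

/-- Metric coefficients h_{jk}(y) = Σ_i (∂r_i/∂y_j)(y)(∂r_i/∂y_k)(y). -/
noncomputable def hlow (r : (Fin 2 → ℝ) → Fin 2 → ℝ) (j k : Fin 2) (y : Fin 2 → ℝ) : ℝ :=
  ∑ i : Fin 2, pdv r i j y * pdv r i k y

/-- Inverse metric coefficients h^{jk}(y) = Σ_i (∂r̄_k/∂x_i)(r y)(∂r̄_j/∂x_i)(r y). -/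
noncomputable def hup (r rb : (Fin 2 → ℝ) → Fin 2 → ℝ) (j k : Fin 2) (y : Fin 2 → ℝ) : ℝ :=
  ∑ i : Fin 2, pdv rb k i (r y) * pdv rb j i (r y)

/-- Jacobian matrix of a map `f : ℝ² → ℝ²` at `x`. -/
noncomputable def jac (f : (Fin 2 → ℝ) → Fin 2 → ℝ) (x : Fin 2 → ℝ) :
    Matrix (Fin 2) (Fin 2) ℝ :=
  Matrix.of fun i j => pdv f i j x


private lemma vec_decomp (v : Fin 2 → ℝ) :
    v = v 0 • (Pi.single 0 1 : Fin 2 → ℝ) + v 1 • (Pi.single 1 1 : Fin 2 → ℝ) := by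
  ext i; fin_cases i <;> simp

private lemma clm_eval {F : Type*} [NormedAddCommGroup F] [NormedSpace ℝ F]
    (L : (Fin 2 → ℝ) →L[ℝ] F) (v : Fin 2 → ℝ) :
    L v = v 0 • L (Pi.single 0 1) + v 1 • L (Pi.single 1 1) := by
  conv_lhs => rw [vec_decomp v]
  rw [map_add, ContinuousLinearMap.map_smul, ContinuousLinearMap.map_smul]

/-- for a volume-preserving C² diffeomorphism, the Euclidean Laplacian of a C²
function f transforms into divergence form:
(Δf)(r y) = Σ_k ∂/∂y_k ( Σ_j h^{jk}(y) ∂(f∘r)/∂y_j (y) ). -/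
theorem statement7
    (O₀ O : Set (Fin 2 → ℝ)) (hO₀ : IsOpen O₀) (hO : IsOpen O)
    (r rb : (Fin 2 → ℝ) → Fin 2 → ℝ)
    (hr : ContDiffOn ℝ 2 r O₀) (hrb : ContDiffOn ℝ 2 rb O)
    (hrO : Set.MapsTo r O₀ O) (hrbO : Set.MapsTo rb O O₀)
    (hleft : ∀ y ∈ O₀, rb (r y) = y) (hright : ∀ x ∈ O, r (rb x) = x)
    (hdet : ∀ x ∈ O, (jac rb x).det = 1)
    (f : (Fin 2 → ℝ) → ℝ) (hf : ContDiffOn ℝ 2 f O) :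
    ∀ y ∈ O₀,
      (∑ m : Fin 2, pds (fun x => pds f m x) m (r y))
        = ∑ k : Fin 2, pds (fun z => ∑ j : Fin 2, hup r rb j k z * pds (f ∘ r) j z) k y := by
  intro y₀ hy₀
  have hx₀O : r y₀ ∈ O := hrO hy₀
  -- basic differentiability
  have hrd : ∀ z ∈ O₀, DifferentiableAt ℝ r z := fun z hz =>
    (hr.differentiableOn (by norm_num)).differentiableAt (hO₀.mem_nhds hz)
  have hrbd : ∀ x ∈ O, DifferentiableAt ℝ rb x := fun x hx =>
    (hrb.differentiableOn (by norm_num)).differentiableAt (hO.mem_nhds hx)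
  have hfd : ∀ x ∈ O, DifferentiableAt ℝ f x := fun x hx =>
    (hf.differentiableOn (by norm_num)).differentiableAt (hO.mem_nhds hx)
  have hrC1 : ContDiffOn ℝ 1 (fderiv ℝ r) O₀ := hr.fderiv_of_isOpen hO₀ (by norm_num)
  have hfC1 : ContDiffOn ℝ 1 (fderiv ℝ f) O := hf.fderiv_of_isOpen hO (by norm_num)
  have hrd' : DifferentiableAt ℝ (fderiv ℝ r) y₀ :=
    (hrC1.differentiableOn (by norm_num)).differentiableAt (hO₀.mem_nhds hy₀)
  have hfd' : DifferentiableAt ℝ (fderiv ℝ f) (r y₀) :=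
    (hfC1.differentiableOn (by norm_num)).differentiableAt (hO.mem_nhds hx₀O)
  -- Jacobian entry identities on O₀ :  D rb (r z) = adjugate (D r z)
  have hent : ∀ z ∈ O₀,
      pdv rb 0 0 (r z) = pdv r 1 1 z ∧ pdv rb 0 1 (r z) = -pdv r 0 1 z ∧
      pdv rb 1 0 (r z) = -pdv r 1 0 z ∧ pdv rb 1 1 (r z) = pdv r 0 0 z := by
    intro z hz
    have hxO : r z ∈ O := hrO hz
    have hcomp : fderiv ℝ (rb ∘ r) z = (fderiv ℝ rb (r z)).comp (fderiv ℝ r z) :=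
      fderiv_comp z (hrbd _ hxO) (hrd z hz)
    have hid : rb ∘ r =ᶠ[nhds z] id := by
      filter_upwards [hO₀.mem_nhds hz] with w hw using hleft w hw
    have hBA : ∀ v, fderiv ℝ rb (r z) (fderiv ℝ r z v) = v := by
      intro v
      have h2 : (fderiv ℝ rb (r z)).comp (fderiv ℝ r z) = ContinuousLinearMap.id ℝ _ := by
        rw [← hcomp, hid.fderiv_eq, fderiv_id]
      have h3 := congrArg (fun L : (Fin 2 → ℝ) →L[ℝ] (Fin 2 → ℝ) => L v) h2
      simpa using h3
    have hmul : jac rb (r z) * jac r z = 1 := by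
      ext i j
      have h1 := congrFun (hBA (Pi.single j 1)) i
      rw [clm_eval (fderiv ℝ rb (r z)) (fderiv ℝ r z (Pi.single j 1))] at h1
      simp only [Pi.add_apply, Pi.smul_apply, smul_eq_mul] at h1
      simp only [jac, Matrix.mul_apply, Fin.sum_univ_two, Matrix.of_apply, pdv,
        Matrix.one_apply, Pi.single_apply] at h1 ⊢
      rw [← h1]; ring
    have hAdj : jac r z = (jac rb (r z)).adjugate := by
      have h1 : (jac rb (r z))⁻¹ = jac r z := Matrix.inv_eq_right_inv hmul
      rw [← h1, Matrix.inv_def, hdet (r z) hxO]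
      simp
    rw [Matrix.adjugate_fin_two] at hAdj
    refine ⟨?_, ?_, ?_, ?_⟩
    · have h := congrFun (congrFun hAdj 1) 1
      simp [jac] at h
      linarith
    · have h := congrFun (congrFun hAdj 0) 1
      simp [jac] at h
      linarith
    · have h := congrFun (congrFun hAdj 1) 0
      simp [jac] at h
      linarith
    · have h := congrFun (congrFun hAdj 0) 0
      simp [jac] at h
      linarith
  -- determinant of D r equals 1 on O₀
  have hdetA : ∀ z ∈ O₀,
      pdv r 0 0 z * pdv r 1 1 z - pdv r 0 1 z * pdv r 1 0 z = 1 := by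
    intro z hz
    obtain ⟨e1, e2, e3, e4⟩ := hent z hz
    have h := hdet (r z) (hrO hz)
    rw [Matrix.det_fin_two] at h
    simp only [jac, Matrix.of_apply] at h
    rw [e1, e2, e3, e4] at h
    linarith [h]
  -- chain rule for the scalar function f ∘ r on O₀
  have hchain : ∀ z ∈ O₀, ∀ j : Fin 2, pds (f ∘ r) j z =
      pdv r 0 j z * pds f 0 (r z) + pdv r 1 j z * pds f 1 (r z) := by
    intro z hz j
    have hxO : r z ∈ O := hrO hz
    show fderiv ℝ (f ∘ r) z (Pi.single j 1) = _
    rw [fderiv_comp z (hfd _ hxO) (hrd z hz), ContinuousLinearMap.comp_apply,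
      clm_eval (fderiv ℝ f (r z)) (fderiv ℝ r z (Pi.single j 1))]
    simp only [smul_eq_mul, pdv, pds]
  -- the two components of the transformed gradient field, simplified on O₀
  have hW0 : ∀ z ∈ O₀, (∑ j : Fin 2, hup r rb j 0 z * pds (f ∘ r) j z) =
      pdv r 1 1 z * pds f 0 (r z) - pdv r 0 1 z * pds f 1 (r z) := by
    intro z hz
    obtain ⟨e1, e2, e3, e4⟩ := hent z hz
    have hd := hdetA z hz
    simp only [Fin.sum_univ_two, hup, hchain z hz, e1, e2, e3, e4]
    linear_combination (pdv r 1 1 z * pds f 0 (r z) - pdv r 0 1 z * pds f 1 (r z)) * hd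
  have hW1 : ∀ z ∈ O₀, (∑ j : Fin 2, hup r rb j 1 z * pds (f ∘ r) j z) =
      pdv r 0 0 z * pds f 1 (r z) - pdv r 1 0 z * pds f 0 (r z) := by
    intro z hz
    obtain ⟨e1, e2, e3, e4⟩ := hent z hz
    have hd := hdetA z hz
    simp only [Fin.sum_univ_two, hup, hchain z hz, e1, e2, e3, e4]
    linear_combination (pdv r 0 0 z * pds f 1 (r z) - pdv r 1 0 z * pds f 0 (r z)) * hd
  -- second derivative data at y₀
  have hΨ : HasFDerivAt (fderiv ℝ r) (fderiv ℝ (fderiv ℝ r) y₀) y₀ := hrd'.hasFDerivAt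
  have hΦ : HasFDerivAt (fderiv ℝ f) (fderiv ℝ (fderiv ℝ f) (r y₀)) (r y₀) := hfd'.hasFDerivAt
  have hev : ∀ᶠ z in nhds y₀, HasFDerivAt r (fderiv ℝ r z) z := by
    filter_upwards [hO₀.mem_nhds hy₀] with z hz using (hrd z hz).hasFDerivAt
  have hsymr : ∀ v w, fderiv ℝ (fderiv ℝ r) y₀ v w = fderiv ℝ (fderiv ℝ r) y₀ w v :=
    fun v w => second_derivative_symmetric_of_eventually hev hΨ v w
  -- first-order derivative objects at y₀
  have hA : HasFDerivAt r (fderiv ℝ r y₀) y₀ := (hrd y₀ hy₀).hasFDerivAt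
  have hpdsf : ∀ i : Fin 2, HasFDerivAt (pds f i)
      ((ContinuousLinearMap.apply ℝ ℝ (Pi.single i 1)).comp (fderiv ℝ (fderiv ℝ f) (r y₀)))
      (r y₀) := by
    intro i
    have h := (ContinuousLinearMap.apply ℝ ℝ (Pi.single i 1)).hasFDerivAt.comp (r y₀) hΦ
    exact h.congr_of_eventuallyEq (Filter.Eventually.of_forall fun x => by
      simp [pds, Function.comp])
  have hpdsfr : ∀ i : Fin 2, HasFDerivAt (fun z => pds f i (r z))
      (((ContinuousLinearMap.apply ℝ ℝ (Pi.single i 1)).comp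
        (fderiv ℝ (fderiv ℝ f) (r y₀))).comp (fderiv ℝ r y₀)) y₀ :=
    fun i => (hpdsf i).comp y₀ hA
  have hpdvr : ∀ i j : Fin 2, HasFDerivAt (fun z => pdv r i j z)
      (((ContinuousLinearMap.proj (R := ℝ) (φ := fun _ : Fin 2 => ℝ) i).comp
        (ContinuousLinearMap.apply ℝ (Fin 2 → ℝ) (Pi.single j 1))).comp
        (fderiv ℝ (fderiv ℝ r) y₀)) y₀ := by
    intro i j
    have h := (((ContinuousLinearMap.proj (R := ℝ) (φ := fun _ : Fin 2 => ℝ) i).comp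
        (ContinuousLinearMap.apply ℝ (Fin 2 → ℝ) (Pi.single j 1)))).hasFDerivAt.comp y₀ hΨ
    exact h.congr_of_eventuallyEq (Filter.Eventually.of_forall fun z => by
      simp [pdv, Function.comp])
  -- derivative of each simplified component
  have hg0 := ((hpdvr 1 1).mul (hpdsfr 0)).sub ((hpdvr 0 1).mul (hpdsfr 1))
  have hg1 := ((hpdvr 0 0).mul (hpdsfr 1)).sub ((hpdvr 1 0).mul (hpdsfr 0))
  -- right-hand side summands
  have heq0 : (fun z => ∑ j : Fin 2, hup r rb j 0 z * pds (f ∘ r) j z)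
      =ᶠ[nhds y₀] (fun z => pdv r 1 1 z * pds f 0 (r z) - pdv r 0 1 z * pds f 1 (r z)) := by
    filter_upwards [hO₀.mem_nhds hy₀] with z hz using hW0 z hz
  have heq1 : (fun z => ∑ j : Fin 2, hup r rb j 1 z * pds (f ∘ r) j z)
      =ᶠ[nhds y₀] (fun z => pdv r 0 0 z * pds f 1 (r z) - pdv r 1 0 z * pds f 0 (r z)) := by
    filter_upwards [hO₀.mem_nhds hy₀] with z hz using hW1 z hz
  have hWd0 : pds (fun z => ∑ j : Fin 2, hup r rb j 0 z * pds (f ∘ r) j z) 0 y₀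
      = (pdv r 1 1 y₀ *
            (fderiv ℝ (fderiv ℝ f) (r y₀) (fderiv ℝ r y₀ (Pi.single 0 1)) (Pi.single 0 1))
          + pds f 0 (r y₀) * (fderiv ℝ (fderiv ℝ r) y₀ (Pi.single 0 1) (Pi.single 1 1) 1))
        - (pdv r 0 1 y₀ *
            (fderiv ℝ (fderiv ℝ f) (r y₀) (fderiv ℝ r y₀ (Pi.single 0 1)) (Pi.single 1 1))
          + pds f 1 (r y₀) * (fderiv ℝ (fderiv ℝ r) y₀ (Pi.single 0 1) (Pi.single 1 1) 0)) := by
    show fderiv ℝ _ y₀ (Pi.single 0 1) = _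
    rw [heq0.fderiv_eq, HasFDerivAt.fderiv
      (f := fun z => pdv r 1 1 z * pds f 0 (r z) - pdv r 0 1 z * pds f 1 (r z)) hg0]
    simp only [ContinuousLinearMap.sub_apply, ContinuousLinearMap.add_apply,
      ContinuousLinearMap.smul_apply, smul_eq_mul, ContinuousLinearMap.comp_apply,
      ContinuousLinearMap.apply_apply, ContinuousLinearMap.proj_apply]
  have hWd1 : pds (fun z => ∑ j : Fin 2, hup r rb j 1 z * pds (f ∘ r) j z) 1 y₀
      = (pdv r 0 0 y₀ *
            (fderiv ℝ (fderiv ℝ f) (r y₀) (fderiv ℝ r y₀ (Pi.single 1 1)) (Pi.single 1 1))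
          + pds f 1 (r y₀) * (fderiv ℝ (fderiv ℝ r) y₀ (Pi.single 1 1) (Pi.single 0 1) 0))
        - (pdv r 1 0 y₀ *
            (fderiv ℝ (fderiv ℝ f) (r y₀) (fderiv ℝ r y₀ (Pi.single 1 1)) (Pi.single 0 1))
          + pds f 0 (r y₀) * (fderiv ℝ (fderiv ℝ r) y₀ (Pi.single 1 1) (Pi.single 0 1) 1)) := by
    show fderiv ℝ _ y₀ (Pi.single 1 1) = _
    rw [heq1.fderiv_eq, HasFDerivAt.fderiv
      (f := fun z => pdv r 0 0 z * pds f 1 (r z) - pdv r 1 0 z * pds f 0 (r z)) hg1]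
    simp only [ContinuousLinearMap.sub_apply, ContinuousLinearMap.add_apply,
      ContinuousLinearMap.smul_apply, smul_eq_mul, ContinuousLinearMap.comp_apply,
      ContinuousLinearMap.apply_apply, ContinuousLinearMap.proj_apply]
  -- left-hand side summands
  have hLm : ∀ m : Fin 2, pds (fun x => pds f m x) m (r y₀)
      = fderiv ℝ (fderiv ℝ f) (r y₀) (Pi.single m 1) (Pi.single m 1) := by
    intro m
    show fderiv ℝ (pds f m) (r y₀) (Pi.single m 1) = _
    rw [(hpdsf m).fderiv]
    simp only [ContinuousLinearMap.comp_apply, ContinuousLinearMap.apply_apply]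
  -- assemble
  rw [Fin.sum_univ_two, Fin.sum_univ_two, hLm 0, hLm 1, hWd0, hWd1]
  rw [clm_eval (fderiv ℝ (fderiv ℝ f) (r y₀)) (fderiv ℝ r y₀ (Pi.single 0 1)),
      clm_eval (fderiv ℝ (fderiv ℝ f) (r y₀)) (fderiv ℝ r y₀ (Pi.single 1 1))]
  simp only [ContinuousLinearMap.add_apply, ContinuousLinearMap.smul_apply, smul_eq_mul]
  have ht0 := congrFun (hsymr (Pi.single 0 1) (Pi.single 1 1)) 0
  have ht1 := congrFun (hsymr (Pi.single 0 1) (Pi.single 1 1)) 1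
  have hd := hdetA y₀ hy₀
  simp only [pdv] at hd ⊢
  linear_combination
    (-(fderiv ℝ (fderiv ℝ f) (r y₀) (Pi.single 0 1) (Pi.single 0 1)
      + fderiv ℝ (fderiv ℝ f) (r y₀) (Pi.single 1 1) (Pi.single 1 1))) * hd
    + pds f 1 (r y₀) * ht0 - pds f 0 (r y₀) * ht1
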